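/- Let C be a Krull-Schmidt category and f a morphism in C. Then f lies in the transfinite radical rad_C* if and only if there exists a collection of morphisms f_{pr}: X_r → X_p in rad_C, one for each pair of rational numbers 0 ≤ p < r ≤ 1, such that f_{ps} = f_{pr} ∘ f_{rs} whenever p < r < s and f_{01} = f. -/

import Mathlib

open CategoryTheory CategoryTheory.Limits

universe w v u

structure CatIdeal (C : Type u) [Category.{v} C] [Preadditive C] where
  mem : ∀ {X Y : C}, (X ⟶ Y) → Prop
  zero_mem : ∀ {X Y : C}, mem (0 : X ⟶ Y)
  add_mem : ∀ {X Y : C} {f g : X ⟶ Y}, mem f → mem g → mem (f + g)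
  comp_mem_left : ∀ {X Y Z : C} {f : X ⟶ Y} (g : Y ⟶ Z), mem f → mem (f ≫ g)
  comp_mem_right : ∀ {X Y Z : C} (f : X ⟶ Y) {g : Y ⟶ Z}, mem g → mem (f ≫ g)

namespace CatIdeal

variable {C : Type u} [Category.{v} C] [Preadditive C]

instance : LE (CatIdeal C) :=
  ⟨fun I J => ∀ {X Y : C} {f : X ⟶ Y}, I.mem f → J.mem f⟩

/-- The ideal of all morphisms. -/
def top (C : Type u) [Category.{v} C] [Preadditive C] : CatIdeal C where
  mem _ := True
  zero_mem := trivial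
  add_mem := by intros; trivial
  comp_mem_left := by intros; trivial
  comp_mem_right := by intros; trivial

/-- The ideal generated by a class of morphisms. -/
def span (S : ∀ {X Y : C}, (X ⟶ Y) → Prop) : CatIdeal C where
  mem f := ∀ J : CatIdeal C, (∀ {A B : C} {g : A ⟶ B}, S g → J.mem g) → J.mem f
  zero_mem := fun J _ => J.zero_mem
  add_mem := by intro X Y f g hf hg J hS; exact J.add_mem (hf J hS) (hg J hS)
  comp_mem_left := by intro X Y Z f g hf J hS; exact J.comp_mem_left g (hf J hS)
  comp_mem_right := by intro X Y Z f g hg J hS; exact J.comp_mem_right f (hg J hS)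

/-- The product of two ideals: the ideal generated by all composites `g ≫ h`
with `g ∈ I` and `h ∈ J`. -/
def mul (I J : CatIdeal C) : CatIdeal C :=
  span (fun {X Z} f => ∃ (Y : C) (g : X ⟶ Y) (h : Y ⟶ Z), I.mem g ∧ J.mem h ∧ f = g ≫ h)

/-- An ideal is idempotent if it equals its square. -/
def IsIdempotent (I : CatIdeal C) : Prop := I = I.mul I

/-- The intersection of a family of ideals. -/
def iInter {ι : Sort*} (F : ι → CatIdeal C) : CatIdeal C where
  mem f := ∀ i, (F i).mem f
  zero_mem := fun i => (F i).zero_mem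
  add_mem := by intro X Y f g hf hg i; exact (F i).add_mem (hf i) (hg i)
  comp_mem_left := by intro X Y Z f g hf i; exact (F i).comp_mem_left g (hf i)
  comp_mem_right := by intro X Y Z f g hg i; exact (F i).comp_mem_right f (hg i)

/-- Finite powers of an ideal: `npow I n` is the ideal generated by `n`-fold
composites of morphisms from `I` (with `npow I 0` the ideal of all morphisms). -/
def npow (I : CatIdeal C) : ℕ → CatIdeal C
  | 0 => top C
  | n + 1 => (npow I n).mul I

/-- The largest limit-or-zero ordinal `≤ α`, namely `ω * (α / ω)`. -/
noncomputable def limitPart (α : Ordinal.{w}) : Ordinal.{w} :=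
  Ordinal.omega0 * (α / Ordinal.omega0)

theorem limitPart_lt {α : Ordinal.{w}} (h0 : α ≠ 0) (hl : ¬ Order.IsSuccLimit α) :
    limitPart α < α := by
  have hle : limitPart α ≤ α := Ordinal.mul_div_le α Ordinal.omega0
  rcases lt_or_eq_of_le hle with h | h
  · exact h
  · exfalso
    rcases eq_or_ne (α / Ordinal.omega0) 0 with hq | hq
    · exact h0 (by rw [← h]; simp [limitPart, hq])
    · exact hl (by rw [← h]; exact Ordinal.isSuccLimit_mul_left Ordinal.isSuccLimit_omega0 (pos_iff_ne_zero.2 hq))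

end CatIdeal

open Ordinal Classical in
/-- Transfinite powers of an ideal `I`: `tpow I 0` is the ideal of all morphisms,
`tpow I n` (for finite `n ≥ 1`) is the ideal generated by `n`-fold composites of
morphisms from `I`, `tpow I α = ⋂_{β < α} tpow I β` at limit ordinals `α`, and
`tpow I (β + n) = (tpow I β) ^ (n + 1)` for `β` limit and `1 ≤ n < ω`. -/
noncomputable def CatIdeal.tpow {C : Type u} [Category.{v} C] [Preadditive C]
    (I : CatIdeal C) : Ordinal.{w} → CatIdeal C
  | α =>
    if h0 : α = 0 then CatIdeal.top C
    else if hl : Order.IsSuccLimit α then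
      CatIdeal.iInter (fun β : {β : Ordinal.{w} // β < α} =>
        have := β.2
        CatIdeal.tpow I β.1)
    else
      (have : Ordinal.pred α < α :=
        Ordinal.pred_lt_iff_not_isSuccPrelimit.2 (fun hp => hl (Ordinal.isSuccLimit_iff.2 ⟨h0, hp⟩))
       CatIdeal.tpow I (Ordinal.pred α)).mul
        (if Ordinal.omega0 ≤ α then
          have := CatIdeal.limitPart_lt h0 hl
          CatIdeal.tpow I (CatIdeal.limitPart α)
         else I)
  termination_by α => α

namespace CatIdeal

/-- The intersection `I* = ⋂_α I^α` of all transfinite powers of `I`. -/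
noncomputable def tstar {C : Type u} [Category.{v} C] [Preadditive C] (I : CatIdeal C) : CatIdeal C :=
  iInter (fun α : Ordinal.{v} => tpow I α)

end CatIdeal

section KS

open CategoryTheory CategoryTheory.Limits

variable (C : Type u) [Category.{v} C] [Preadditive C]

/-- `X` is a biproduct (finite direct sum) of the finite family `Y`,
witnessed by projections and inclusions. -/
def IsBiproductOf (X : C) {n : ℕ} (Y : Fin n → C) : Prop :=
  ∃ (p : ∀ i, X ⟶ Y i) (s : ∀ i, Y i ⟶ X),
    (∀ i, s i ≫ p i = 𝟙 (Y i)) ∧ (∀ i j, i ≠ j → s i ≫ p j = 0) ∧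
    (∑ i, p i ≫ s i) = 𝟙 X

/-- An object is indecomposable if it is nonzero and has no idempotent endomorphisms
other than `0` and the identity (i.e. it admits no nontrivial direct sum decomposition). -/
def IsIndecomposableObj (X : C) : Prop :=
  ¬ IsZero X ∧ ∀ e : X ⟶ X, e ≫ e = e → e = 0 ∨ e = 𝟙 X

/-- The radical of a Krull-Schmidt category: the ideal generated by all non-invertible
morphisms between indecomposable objects. -/
def catRadical : CatIdeal C :=
  CatIdeal.span (fun {X Y} f => IsIndecomposableObj C X ∧ IsIndecomposableObj C Y ∧ ¬ IsIso f)

/-- The transfinite radical `rad_C* = ⋂_α rad_C^α`. -/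
noncomputable def catTransRadical : CatIdeal C := CatIdeal.tstar (catRadical C)

/-- A Krull-Schmidt category: every object decomposes as a finite direct sum of objects
with local endomorphism rings. -/
def IsKrullSchmidt : Prop :=
  ∀ X : C, ∃ (n : ℕ) (Y : Fin n → C),
    (∀ i, IsLocalRing (End (Y i))) ∧ IsBiproductOf C X Y

/-- Local descending chain condition on ideals: every descending chain of ideals,
evaluated at any fixed pair of objects, stabilizes. -/
def HasLocalDCC : Prop :=
  ∀ (I : ℕ → CatIdeal C), (∀ n, I (n + 1) ≤ I n) →
    ∀ X Y : C, ∃ n, ∀ m, n ≤ m → ∀ f : X ⟶ Y, (I m).mem f ↔ (I n).mem f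

/-- The ideal generated by the identity morphisms of the objects in `S`. -/
def identityIdeal (S : Set C) : CatIdeal C :=
  CatIdeal.span (fun {X Y} f => ∃ h : X = Y, X ∈ S ∧ f = CategoryTheory.eqToHom h)

/-- An ideal is zero if it consists exactly of the zero morphisms. -/
def CatIdeal.IsZeroIdeal {C : Type u} [Category.{v} C] [Preadditive C] (I : CatIdeal C) : Prop :=
  ∀ {X Y : C} {f : X ⟶ Y}, I.mem f → f = 0

end KS

/-!
If `f = f₀₁` belongs to a system `(f_pr)` of morphisms of an ideal `I`, then every `f_pr` lies
in every `I^α`, by induction on `α`: at a non-limit stage `α`, split `f_pr = f_mr ≫ f_pm` at the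
midpoint `m` and place the two factors in `I^(pred α)` and in `I^(limitPart α)` (or `I`).

Conversely, as `C` is essentially small, the antitone family `α ↦ I^α` is eventually constant,
say from `α₀` on. For the limit ordinal `λ = α₀ + ω` this gives `I* = I^(λ+1) = (I^λ)² = (I*)²`,
and with finite biproducts every morphism of `(I*)²` is a single composite of two morphisms
of `I*`. Enumerate the rationals of `(0, 1)` and insert them one at a time, starting from `f`
on `{0, 1}`: a new point `t` with neighbours `a < t < b` gets as its object a factorization
`f_ab = v ≫ w` through `I*`. Each point is only touched once, so the stages converge.
-/

namespace CatIdeal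

variable {C : Type u} [Category.{v} C] [Preadditive C]

lemma mem_span_of {S : ∀ {X Y : C}, (X ⟶ Y) → Prop} {X Y : C} {f : X ⟶ Y} (h : S f) :
    (span S).mem f :=
  fun _ hS => hS h

lemma span_le {S : ∀ {X Y : C}, (X ⟶ Y) → Prop} {J : CatIdeal C}
    (h : ∀ {A B : C} {g : A ⟶ B}, S g → J.mem g) : span S ≤ J :=
  fun hf => hf J h

lemma comp_mem_mul {I J : CatIdeal C} {X Y Z : C} {g : X ⟶ Y} {h : Y ⟶ Z}
    (hg : I.mem g) (hh : J.mem h) : (I.mul J).mem (g ≫ h) :=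
  mem_span_of ⟨_, g, h, hg, hh, rfl⟩

lemma mul_le_left {I J : CatIdeal C} : I.mul J ≤ I :=
  span_le fun ⟨_, _, h, hg, _, he⟩ => he ▸ I.comp_mem_left h hg

lemma mul_le_right {I J : CatIdeal C} : I.mul J ≤ J :=
  span_le fun ⟨_, g, _, _, hh, he⟩ => he ▸ J.comp_mem_right g hh

lemma mul_le_mul {I I' J J' : CatIdeal C} (hI : I ≤ I') (hJ : J ≤ J') : I.mul J ≤ I'.mul J' :=
  span_le fun ⟨_, _, _, hg, hh, he⟩ => he ▸ comp_mem_mul (hI hg) (hJ hh)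

lemma comp_mem_iff_of_iso (J : CatIdeal C) {X X' Y Y' : C} (i : X ≅ X') (j : Y ≅ Y')
    (u : X ⟶ Y) : J.mem (i.inv ≫ u ≫ j.hom) ↔ J.mem u := by
  refine ⟨fun h => ?_, fun h => J.comp_mem_right _ (J.comp_mem_left _ h)⟩
  simpa using J.comp_mem_right i.hom (J.comp_mem_left j.inv h)

/-- With binary biproducts, single composites `g ≫ h` with `g ∈ I`, `h ∈ J` are closed under
addition: `g₁ ≫ h₁ + g₂ ≫ h₂` factors through `Y₁ ⊞ Y₂`. -/
def compIdeal [HasBinaryBiproducts C] (I J : CatIdeal C) : CatIdeal C where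
  mem {X Z} f := ∃ (Y : C) (g : X ⟶ Y) (h : Y ⟶ Z), I.mem g ∧ J.mem h ∧ f = g ≫ h
  zero_mem {X _} := ⟨X, 0, 0, I.zero_mem, J.zero_mem, by simp⟩
  add_mem := by
    rintro X Z _ _ ⟨Y₁, g₁, h₁, hg₁, hh₁, rfl⟩ ⟨Y₂, g₂, h₂, hg₂, hh₂, rfl⟩
    refine ⟨Y₁ ⊞ Y₂, biprod.lift g₁ g₂, biprod.desc h₁ h₂, ?_, ?_, biprod.lift_desc.symm⟩
    · rw [biprod.lift_eq]
      exact I.add_mem (I.comp_mem_left _ hg₁) (I.comp_mem_left _ hg₂)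
    · rw [biprod.desc_eq]
      exact J.add_mem (J.comp_mem_right _ hh₁) (J.comp_mem_right _ hh₂)
  comp_mem_left := by
    rintro X Z W f u ⟨Y, g, h, hg, hh, rfl⟩
    exact ⟨Y, g, h ≫ u, hg, J.comp_mem_left _ hh, by simp⟩
  comp_mem_right := by
    rintro X Z W f u ⟨Y, g, h, hg, hh, rfl⟩
    exact ⟨Y, f ≫ g, h, I.comp_mem_right _ hg, hh, by simp⟩

lemma exists_eq_comp_of_mem_mul [HasFiniteBiproducts C] {I J : CatIdeal C} {X Z : C}
    {f : X ⟶ Z} (hf : (I.mul J).mem f) :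
    ∃ (Y : C) (g : X ⟶ Y) (h : Y ⟶ Z), I.mem g ∧ J.mem h ∧ f = g ≫ h :=
  have := hasBinaryBiproducts_of_finite_biproducts C
  hf (compIdeal I J) id

open Order Ordinal

lemma tpow_zero (I : CatIdeal C) : tpow I (0 : Ordinal.{w}) = top C := by
  rw [tpow, dif_pos rfl]

lemma tpow_of_isSuccLimit (I : CatIdeal C) {α : Ordinal.{w}} (hα : IsSuccLimit α) :
    tpow I α = iInter fun β : {β : Ordinal.{w} // β < α} => tpow I β.1 := by
  rw [tpow, dif_neg hα.pos.ne', dif_pos hα]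

open Classical in
lemma tpow_of_not_isSuccLimit (I : CatIdeal C) {α : Ordinal.{w}} (h0 : α ≠ 0)
    (hα : ¬IsSuccLimit α) :
    tpow I α = (tpow I (pred α)).mul (if ω ≤ α then tpow I (limitPart α) else I) := by
  rw [tpow, dif_neg h0, dif_neg hα]

lemma pred_lt_of_not_isSuccLimit {α : Ordinal.{w}} (h0 : α ≠ 0) (hα : ¬IsSuccLimit α) :
    pred α < α :=
  pred_lt_iff_not_isSuccPrelimit.2 fun h => hα (isSuccLimit_iff.2 ⟨h0, h⟩)

lemma tpow_le_tpow (I : CatIdeal C) {β α : Ordinal.{w}} (h : β ≤ α) : tpow I α ≤ tpow I β := by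
  induction α using WellFoundedLT.induction generalizing β with
  | _ α ih =>
  intro X Y f hf
  rcases h.eq_or_lt with rfl | hβα
  · exact hf
  have h0 : α ≠ 0 := hβα.ne_bot
  by_cases hα : IsSuccLimit α
  · rw [tpow_of_isSuccLimit I hα] at hf
    exact hf ⟨β, hβα⟩
  · rw [tpow_of_not_isSuccLimit I h0 hα] at hf
    obtain ⟨γ, rfl⟩ := ((zero_or_succ_or_isSuccLimit α).resolve_left h0).resolve_right hα
    rw [succ_eq_add_one, pred_add_one] at hf
    exact ih γ (lt_succ γ) (lt_succ_iff.1 hβα) (mul_le_left hf)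

lemma tpow_one_le (I : CatIdeal C) : tpow I (1 : Ordinal.{w}) ≤ I := by
  rw [tpow_of_not_isSuccLimit I one_ne_zero
    (by simpa using not_isSuccLimit_add_one (0 : Ordinal.{w})), if_neg (not_le.2 one_lt_omega0)]
  exact mul_le_right

lemma tstar_le (I : CatIdeal C) : tstar I ≤ I :=
  fun hf => tpow_one_le I (hf 1)

lemma tpow_succ_of_isSuccLimit (I : CatIdeal C) {l : Ordinal.{w}} (hl : IsSuccLimit l) :
    tpow I (l + 1) = (tpow I l).mul (tpow I l) := by
  have hlim : limitPart (l + 1) = l := by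
    obtain ⟨c, rfl⟩ := isSuccPrelimit_iff_omega0_dvd.1 hl.isSuccPrelimit
    rw [limitPart, mul_add_div c omega0_ne_zero 1, div_eq_zero_of_lt one_lt_omega0, add_zero]
  rw [tpow_of_not_isSuccLimit I (lt_add_one l).ne_bot (not_isSuccLimit_add_one l),
    pred_add_one, if_pos ((omega0_le_of_isSuccLimit hl).trans le_self_add), hlim]

lemma exists_tpow_stable [EssentiallySmall.{v} C] (I : CatIdeal C) :
    ∃ α₀ : Ordinal.{v}, ∀ γ, α₀ ≤ γ → ∀ {X Y : C} (u : X ⟶ Y),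
      (tpow I γ).mem u ↔ (tpow I α₀).mem u := by
  let e := equivSmallModel.{v} C
  -- transported to the small model, the powers form an antitone family in a small type
  let F : Ordinal.{v} → Set (Σ X Y : SmallModel.{v} C, X ⟶ Y) :=
    fun γ => {d | (tpow I γ).mem (e.inverse.map d.2.2)}
  have hF : Antitone F := fun _ _ h _ hd => tpow_le_tpow I h hd
  obtain ⟨α₀, hα₀⟩ := Filter.eventuallyConst_atTop.1 (Ordinal.eventuallyConst_of_antitone hF)
  refine ⟨α₀, fun γ hγ X Y u => ?_⟩
  have key : ∀ δ, (tpow I δ).mem u ↔ ⟨_, _, e.functor.map u⟩ ∈ F δ := fun δ => by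
    change _ ↔ (tpow I δ).mem (e.inverse.map (e.functor.map u))
    rw [Equivalence.inv_fun_map]
    exact ((tpow I δ).comp_mem_iff_of_iso (e.unitIso.app X) (e.unitIso.app Y) u).symm
  rw [key, key, hα₀ γ hγ]

lemma tstar_le_mul_self [EssentiallySmall.{v} C] (I : CatIdeal C) :
    tstar I ≤ (tstar I).mul (tstar I) := by
  obtain ⟨α₀, hα₀⟩ := exists_tpow_stable I
  have hl : IsSuccLimit (α₀ + ω) := isSuccLimit_add α₀ isSuccLimit_omega0
  have hle : tpow I (α₀ + ω) ≤ tstar I := fun {_ _} u hu γ => by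
    rcases le_total γ (α₀ + ω) with h | h
    · exact tpow_le_tpow I h hu
    · exact (hα₀ γ (le_self_add.trans h) u).2 ((hα₀ _ le_self_add u).1 hu)
  intro X Y u hu
  have hsq : (tpow I (α₀ + ω + 1)).mem u := hu _
  rw [tpow_succ_of_isSuccLimit I hl] at hsq
  exact mul_le_mul hle hle hsq

lemma mem_tpow_of_system (I : CatIdeal C) {X : ℚ → C} {g : ∀ p r : ℚ, X r ⟶ X p}
    (hmem : ∀ p r : ℚ, 0 ≤ p → p < r → r ≤ 1 → I.mem (g p r))
    (hcomp : ∀ p r s : ℚ, 0 ≤ p → p < r → r < s → s ≤ 1 → g p s = g r s ≫ g p r)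
    (α : Ordinal.{w}) : ∀ p r : ℚ, 0 ≤ p → p < r → r ≤ 1 → (tpow I α).mem (g p r) := by
  induction α using WellFoundedLT.induction with
  | _ α ih =>
  intro p r hp hpr hr
  rcases eq_or_ne α 0 with rfl | h0
  · rw [tpow_zero]; trivial
  by_cases hα : IsSuccLimit α
  · rw [tpow_of_isSuccLimit I hα]
    exact fun β => ih β.1 β.2 p r hp hpr hr
  obtain ⟨hpm, hmr⟩ : p < (p + r) / 2 ∧ (p + r) / 2 < r := ⟨by linarith, by linarith⟩
  rw [tpow_of_not_isSuccLimit I h0 hα, hcomp p _ r hp hpm hmr hr]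
  refine comp_mem_mul (ih _ (pred_lt_of_not_isSuccLimit h0 hα) _ r (hp.trans hpm.le) hmr hr) ?_
  split_ifs with hω
  · exact ih _ (limitPart_lt h0 hα) p _ hp hpm (hmr.le.trans hr)
  · exact hmem p _ hp hpm (hmr.le.trans hr)

end CatIdeal

/-- Only the values on the set where a system is required to be coherent matter; the others
are junk, which lets the partial systems of the construction be total functions. -/
structure RatSystem (C : Type u) [Category.{v} C] where
  obj : ℚ → C
  hom : ∀ p r : ℚ, obj r ⟶ obj p

namespace RatSystem

section Agree

variable {C : Type u} [Category.{v} C]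

structure AgreeOn (S : Set ℚ) (F G : RatSystem C) : Prop where
  obj_eq : ∀ q ∈ S, F.obj q = G.obj q
  hom_eq : ∀ p (hp : p ∈ S) r (hr : r ∈ S),
    F.hom p r = eqToHom (obj_eq r hr) ≫ G.hom p r ≫ eqToHom (obj_eq p hp).symm

variable {S S' : Set ℚ} {F G H : RatSystem C}

lemma AgreeOn.refl (F : RatSystem C) (S : Set ℚ) : F.AgreeOn S F :=
  ⟨fun _ _ => rfl, fun _ _ _ _ => by simp⟩

lemma AgreeOn.mono (h : F.AgreeOn S G) (hS : S' ⊆ S) : F.AgreeOn S' G :=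
  ⟨fun q hq => h.obj_eq q (hS hq), fun p hp r hr => h.hom_eq p (hS hp) r (hS hr)⟩

lemma AgreeOn.trans (h₁ : F.AgreeOn S G) (h₂ : G.AgreeOn S H) : F.AgreeOn S H :=
  ⟨fun q hq => (h₁.obj_eq q hq).trans (h₂.obj_eq q hq),
    fun p hp r hr => by simp [h₁.hom_eq p hp r hr, h₂.hom_eq p hp r hr]⟩

lemma agreeOn_of_le {S : ℕ → Set ℚ} (hS : Monotone S) {F : ℕ → RatSystem C}
    (hF : ∀ n, (F (n + 1)).AgreeOn (S n) (F n)) {n m : ℕ} (h : n ≤ m) :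
    (F m).AgreeOn (S n) (F n) := by
  induction m, h using Nat.le_induction with
  | base => exact AgreeOn.refl _ _
  | succ m hnm ih => exact ((hF m).mono (hS hnm)).trans ih

/-- The limit takes its value at `q` from the first stage whose set contains `q`. -/
lemma exists_agreeOn_of_chain {S : ℕ → Set ℚ} (hS : Monotone S) (hcover : ∀ q, ∃ n, q ∈ S n)
    {F : ℕ → RatSystem C} (hF : ∀ n, (F (n + 1)).AgreeOn (S n) (F n)) :
    ∃ L : RatSystem C, ∀ n, L.AgreeOn (S n) (F n) := by
  classical
  let N : ℚ → ℕ := fun q => Nat.find (hcover q)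
  have hN (q : ℚ) : q ∈ S (N q) := Nat.find_spec (hcover q)
  have hNle {q : ℚ} {n : ℕ} (hq : q ∈ S n) : N q ≤ n := Nat.find_min' _ hq
  have hobj {q : ℚ} {n : ℕ} (hq : q ∈ S n) : (F n).obj q = (F (N q)).obj q :=
    (agreeOn_of_le hS hF (hNle hq)).obj_eq q (hN q)
  let L : RatSystem C :=
    { obj q := (F (N q)).obj q
      hom p r := eqToHom (hobj (hS (le_max_right (N p) (N r)) (hN r))).symm ≫
        (F (max (N p) (N r))).hom p r ≫ eqToHom (hobj (hS (le_max_left (N p) (N r)) (hN p))) }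
  refine ⟨L, fun n => ⟨fun q hq => (hobj hq).symm, fun p hp r hr => ?_⟩⟩
  have := (agreeOn_of_le hS hF (max_le (hNle hp) (hNle hr))).hom_eq
    p (hS (le_max_left _ _) (hN p)) r (hS (le_max_right _ _) (hN r))
  simp [L, this]

section Insert

variable (F : RatSystem C) (t a b : ℚ) {M : C} (v : F.obj b ⟶ M) (w : M ⟶ F.obj a)

/-- Morphisms into the new object `M` at `t` come through `b` and `v`, those out of it go through
`w` and `a`; this is coherent when `a < t < b` are the neighbours of `t` and `v ≫ w` is the
morphism from `b` to `a`. -/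
def insertAt : RatSystem C where
  obj := Function.update F.obj t M
  hom p r :=
    if hp : p = t then
      if hr : r = t then eqToHom (by rw [hp, hr])
      else eqToHom (Function.update_of_ne hr M F.obj) ≫ F.hom b r ≫ v ≫
        eqToHom (by rw [hp, Function.update_self])
    else if hr : r = t then
      eqToHom (by rw [hr, Function.update_self]) ≫ w ≫ F.hom p a ≫
        eqToHom (Function.update_of_ne hp M F.obj).symm
    else eqToHom (Function.update_of_ne hr M F.obj) ≫ F.hom p r ≫
      eqToHom (Function.update_of_ne hp M F.obj).symm

variable {F t a b v w}

lemma insertAt_obj_self : (F.insertAt t a b v w).obj t = M := Function.update_self ..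

lemma insertAt_obj_of_ne {q : ℚ} (hq : q ≠ t) : (F.insertAt t a b v w).obj q = F.obj q :=
  Function.update_of_ne hq ..

lemma insertAt_hom_self : (F.insertAt t a b v w).hom t t = 𝟙 _ := by
  simp [insertAt]

lemma insertAt_hom_left {r : ℚ} (hr : r ≠ t) :
    (F.insertAt t a b v w).hom t r = eqToHom (insertAt_obj_of_ne hr) ≫ F.hom b r ≫ v ≫
      eqToHom (insertAt_obj_self).symm := by
  dsimp only [insertAt]
  rw [dif_pos rfl, dif_neg hr]

lemma insertAt_hom_right {p : ℚ} (hp : p ≠ t) :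
    (F.insertAt t a b v w).hom p t = eqToHom (insertAt_obj_self) ≫ w ≫ F.hom p a ≫
      eqToHom (insertAt_obj_of_ne hp).symm := by
  dsimp only [insertAt]
  rw [dif_neg hp, dif_pos rfl]

lemma insertAt_hom_of_ne {p r : ℚ} (hp : p ≠ t) (hr : r ≠ t) :
    (F.insertAt t a b v w).hom p r = eqToHom (insertAt_obj_of_ne hr) ≫ F.hom p r ≫
      eqToHom (insertAt_obj_of_ne hp).symm := by
  dsimp only [insertAt]
  rw [dif_neg hp, dif_neg hr]

lemma agreeOn_insertAt : (F.insertAt t a b v w).AgreeOn {t}ᶜ F :=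
  ⟨fun _ hq => insertAt_obj_of_ne hq, fun _ hp _ hr => insertAt_hom_of_ne hp hr⟩

end Insert

end Agree

variable {C : Type u} [Category.{v} C] [Preadditive C]

structure IsCoherentOn (T : CatIdeal C) (S : Set ℚ) (F : RatSystem C) : Prop where
  hom_self : ∀ p ∈ S, F.hom p p = 𝟙 _
  mem : ∀ p ∈ S, ∀ r ∈ S, p < r → T.mem (F.hom p r)
  comp : ∀ p ∈ S, ∀ r ∈ S, ∀ s ∈ S, p < r → r < s → F.hom p s = F.hom r s ≫ F.hom p r

variable {T : CatIdeal C} {S S' : Set ℚ} {F G : RatSystem C}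

lemma IsCoherentOn.comp_of_le (hF : F.IsCoherentOn T S) {p r s : ℚ} (hp : p ∈ S) (hr : r ∈ S)
    (hs : s ∈ S) (hpr : p ≤ r) (hrs : r ≤ s) : F.hom p s = F.hom r s ≫ F.hom p r := by
  rcases hpr.eq_or_lt with rfl | hpr
  · simp [hF.hom_self p hp]
  rcases hrs.eq_or_lt with rfl | hrs
  · simp [hF.hom_self r hr]
  exact hF.comp p hp r hr s hs hpr hrs

lemma IsCoherentOn.mono (hF : F.IsCoherentOn T S) (hS : S' ⊆ S) : F.IsCoherentOn T S' :=
  ⟨fun p hp => hF.hom_self p (hS hp), fun p hp r hr => hF.mem p (hS hp) r (hS hr),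
    fun p hp r hr s hs => hF.comp p (hS hp) r (hS hr) s (hS hs)⟩

lemma IsCoherentOn.of_agreeOn (hG : G.IsCoherentOn T S) (h : F.AgreeOn S G) :
    F.IsCoherentOn T S where
  hom_self p hp := by simp [h.hom_eq p hp p hp, hG.hom_self p hp]
  mem p hp r hr hpr := by
    rw [h.hom_eq p hp r hr]
    exact T.comp_mem_right _ (T.comp_mem_left _ (hG.mem p hp r hr hpr))
  comp p hp r hr s hs hpr hrs := by
    simp [h.hom_eq _ hp _ hs, h.hom_eq _ hr _ hs, h.hom_eq _ hp _ hr,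
      hG.comp p hp r hr s hs hpr hrs]

lemma isCoherentOn_iUnion {S : ℕ → Set ℚ} (hS : Monotone S) (h : ∀ n, F.IsCoherentOn T (S n)) :
    F.IsCoherentOn T (⋃ n, S n) where
  hom_self p hp := by
    obtain ⟨i, hp⟩ := Set.mem_iUnion.1 hp
    exact (h i).hom_self p hp
  mem p hp r hr := by
    obtain ⟨i, hp⟩ := Set.mem_iUnion.1 hp
    obtain ⟨j, hr⟩ := Set.mem_iUnion.1 hr
    exact (h (max i j)).mem p (hS (le_max_left _ _) hp) r (hS (le_max_right _ _) hr)
  comp p hp r hr s hs := by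
    obtain ⟨i, hp⟩ := Set.mem_iUnion.1 hp
    obtain ⟨j, hr⟩ := Set.mem_iUnion.1 hr
    obtain ⟨k, hs⟩ := Set.mem_iUnion.1 hs
    exact (h (max i (max j k))).comp p (hS (le_max_left _ _) hp)
      r (hS ((le_max_left _ _).trans (le_max_right _ _)) hr)
      s (hS ((le_max_right _ _).trans (le_max_right _ _)) hs)

section OfHom

variable {A B : C} (f : A ⟶ B)

def ofHom : RatSystem C where
  obj q := if q = 1 then A else B
  hom p r :=
    if h : p = r then eqToHom (by rw [h])
    else if h : p = 0 ∧ r = 1 then eqToHom (by simp [h.2]) ≫ f ≫ eqToHom (by simp [h.1])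
    else 0

lemma ofHom_obj_one : (ofHom f).obj 1 = A := by simp [ofHom]

lemma ofHom_obj_zero : (ofHom f).obj 0 = B := by simp [ofHom]

lemma ofHom_hom_zero_one :
    (ofHom f).hom 0 1 = eqToHom (ofHom_obj_one f) ≫ f ≫ eqToHom (ofHom_obj_zero f).symm := by
  simp [ofHom]

lemma isCoherentOn_ofHom (hf : T.mem f) : (ofHom f).IsCoherentOn T {0, 1} where
  hom_self p _ := by simp [ofHom]
  mem p hp r hr hpr := by
    obtain ⟨rfl, rfl⟩ : p = 0 ∧ r = 1 := by
      rcases hp with rfl | rfl <;> rcases hr with rfl | rfl <;> norm_num at hpr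
      exact ⟨rfl, rfl⟩
    rw [ofHom_hom_zero_one]
    exact T.comp_mem_right _ (T.comp_mem_left _ hf)
  comp p hp r hr s hs hpr hrs := by
    rcases hp with rfl | rfl <;> rcases hr with rfl | rfl <;> rcases hs with rfl | rfl <;>
      linarith

lemma exists_eq_of_agreeOn_ofHom {L : RatSystem C} (h : L.AgreeOn {0, 1} (ofHom f)) :
    ∃ (h1 : L.obj 1 = A) (h0 : L.obj 0 = B), f = eqToHom h1.symm ≫ L.hom 0 1 ≫ eqToHom h0 :=
  ⟨(h.obj_eq 1 (by simp)).trans (ofHom_obj_one f), (h.obj_eq 0 (by simp)).trans (ofHom_obj_zero f),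
    by simp [h.hom_eq 0 (by simp) 1 (by simp), ofHom_hom_zero_one]⟩

end OfHom

section Insert

variable {t a b : ℚ} {M : C} {v : F.obj b ⟶ M} {w : M ⟶ F.obj a}

lemma IsCoherentOn.insertAt_comp (hF : F.IsCoherentOn T S) (ha : a ∈ S) (hb : b ∈ S)
    (hab : a ≤ b) (hbelow : ∀ s ∈ S, s < t → s ≤ a) (habove : ∀ s ∈ S, t < s → b ≤ s)
    (hvw : F.hom a b = v ≫ w) {p r s : ℚ} (hp : p ∈ insert t S) (hr : r ∈ insert t S)
    (hs : s ∈ insert t S) (hpr : p < r) (hrs : r < s) :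
    (F.insertAt t a b v w).hom p s =
      (F.insertAt t a b v w).hom r s ≫ (F.insertAt t a b v w).hom p r := by
  have hS {q : ℚ} (hq : q ∈ insert t S) (hqt : q ≠ t) : q ∈ S := hq.resolve_left hqt
  by_cases hpt : p = t
  · subst hpt
    have hrt := hpr.ne'
    have hst := (hpr.trans hrs).ne'
    rw [insertAt_hom_left hst, insertAt_hom_left hrt, insertAt_hom_of_ne hrt hst,
      hF.comp_of_le hb (hS hr hrt) (hS hs hst) (habove r (hS hr hrt) hpr) hrs.le]
    simp
  by_cases hrt : r = t
  · subst hrt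
    have hst := hrs.ne'
    have hpa := hbelow p (hS hp hpt) hpr
    rw [insertAt_hom_of_ne hpt hst, insertAt_hom_left hst, insertAt_hom_right hpt,
      hF.comp_of_le (hS hp hpt) ha (hS hs hst) hpa (hab.trans (habove s (hS hs hst) hrs)),
      hF.comp_of_le ha hb (hS hs hst) hab (habove s (hS hs hst) hrs), hvw]
    simp
  by_cases hst : s = t
  · subst hst
    rw [insertAt_hom_right hpt, insertAt_hom_right hrt, insertAt_hom_of_ne hpt hrt,
      hF.comp_of_le (hS hp hpt) (hS hr hrt) ha hpr.le (hbelow r (hS hr hrt) hrs)]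
    simp
  rw [insertAt_hom_of_ne hpt hst, insertAt_hom_of_ne hrt hst, insertAt_hom_of_ne hpt hrt,
    hF.comp p (hS hp hpt) r (hS hr hrt) s (hS hs hst) hpr hrs]
  simp

lemma IsCoherentOn.insertAt (hF : F.IsCoherentOn T S) (ha : a ∈ S) (hb : b ∈ S) (hab : a ≤ b)
    (hbelow : ∀ s ∈ S, s < t → s ≤ a) (habove : ∀ s ∈ S, t < s → b ≤ s)
    (hv : T.mem v) (hw : T.mem w) (hvw : F.hom a b = v ≫ w) :
    (F.insertAt t a b v w).IsCoherentOn T (insert t S) where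
  hom_self p hp := by
    by_cases hpt : p = t
    · subst hpt; exact insertAt_hom_self ..
    · simp [insertAt_hom_of_ne hpt hpt, hF.hom_self p (hp.resolve_left hpt)]
  mem p hp r hr hpr := by
    by_cases hpt : p = t
    · subst hpt
      rw [insertAt_hom_left hpr.ne']
      exact T.comp_mem_right _ (T.comp_mem_right _ (T.comp_mem_left _ hv))
    by_cases hrt : r = t
    · subst hrt
      rw [insertAt_hom_right hpt]
      exact T.comp_mem_right _ (T.comp_mem_left _ hw)
    rw [insertAt_hom_of_ne hpt hrt]
    exact T.comp_mem_right _ (T.comp_mem_left _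
      (hF.mem p (hp.resolve_left hpt) r (hr.resolve_left hrt) hpr))
  comp _ hp _ hr _ hs hpr hrs := hF.insertAt_comp ha hb hab hbelow habove hvw hp hr hs hpr hrs

lemma IsCoherentOn.exists_insert [HasFiniteBiproducts C] (hT : T ≤ T.mul T) {S : Finset ℚ}
    (hF : F.IsCoherentOn T S) {t : ℚ} (hlo : ∃ a ∈ S, a < t) (hhi : ∃ b ∈ S, t < b) :
    ∃ G : RatSystem C, G.IsCoherentOn T (insert t S) ∧ G.AgreeOn {t}ᶜ F := by
  obtain ⟨a, ha, hamax⟩ := (S.filter (· < t)).exists_max_image id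
    (hlo.imp fun a ha => Finset.mem_filter.2 ha)
  obtain ⟨b, hb, hbmin⟩ := (S.filter (t < ·)).exists_min_image id
    (hhi.imp fun b hb => Finset.mem_filter.2 hb)
  rw [Finset.mem_filter] at ha hb
  obtain ⟨M, v, w, hv, hw, hvw⟩ :=
    CatIdeal.exists_eq_comp_of_mem_mul (hT (hF.mem a ha.1 b hb.1 (ha.2.trans hb.2)))
  refine ⟨F.insertAt t a b v w, hF.insertAt ha.1 hb.1 (ha.2.trans hb.2).le ?_ ?_ hv hw hvw,
    agreeOn_insertAt⟩
  · exact fun s hs hst => hamax s (Finset.mem_filter.2 ⟨hs, hst⟩)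
  · exact fun s hs hts => hbmin s (Finset.mem_filter.2 ⟨hs, hts⟩)

end Insert

section Enumeration

variable (e : ℕ ≃ Set.Ioo (0 : ℚ) 1)

def stagePoints (n : ℕ) : Finset ℚ := {0, 1} ∪ (Finset.range n).image fun i => (e i : ℚ)

/-- All later stages of the construction agree with stage `n` on these points. -/
def settledPoints (n : ℕ) : Set ℚ := {q | ∀ i, n ≤ i → q ≠ e i}

lemma stagePoints_succ (n : ℕ) : stagePoints e (n + 1) = insert (e n : ℚ) (stagePoints e n) := by
  simp [stagePoints, Finset.range_add_one, Finset.union_insert]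

lemma stagePoints_mono : Monotone (stagePoints e) := fun _ _ h =>
  Finset.union_subset_union le_rfl (Finset.image_subset_image (Finset.range_subset_range.2 h))

lemma zero_mem_stagePoints (n : ℕ) : (0 : ℚ) ∈ stagePoints e n := by simp [stagePoints]

lemma one_mem_stagePoints (n : ℕ) : (1 : ℚ) ∈ stagePoints e n := by simp [stagePoints]

lemma Icc_subset_iUnion_stagePoints : Set.Icc (0 : ℚ) 1 ⊆ ⋃ n, (stagePoints e n : Set ℚ) := by
  intro q ⟨h0, h1⟩
  rw [Set.mem_iUnion]
  by_cases hq : q ∈ Set.Ioo (0 : ℚ) 1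
  · exact ⟨e.symm ⟨q, hq⟩ + 1, by simp [stagePoints_succ]⟩
  · refine ⟨0, ?_⟩
    rcases h0.eq_or_lt with rfl | h0
    · exact zero_mem_stagePoints e 0
    rcases h1.eq_or_lt with rfl | h1
    · exact one_mem_stagePoints e 0
    exact absurd ⟨h0, h1⟩ hq

lemma settledPoints_mono : Monotone (settledPoints e) :=
  fun _ _ hmn _ hq i hi => hq i (hmn.trans hi)

lemma exists_mem_settledPoints (q : ℚ) : ∃ n, q ∈ settledPoints e n := by
  by_cases hq : q ∈ Set.Ioo (0 : ℚ) 1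
  · refine ⟨e.symm ⟨q, hq⟩ + 1, fun i hi h => ?_⟩
    have : e.symm ⟨q, hq⟩ = i := e.symm_apply_eq.2 (Subtype.ext h)
    omega
  · exact ⟨0, fun i _ h => hq (h ▸ (e i).2)⟩

lemma stagePoints_subset_settledPoints (n : ℕ) : ↑(stagePoints e n) ⊆ settledPoints e n := by
  rintro q hq i hi rfl
  simp only [stagePoints, Finset.coe_union, Finset.coe_insert, Finset.coe_singleton,
    Finset.coe_image, Finset.coe_range, Set.mem_union, Set.mem_insert_iff, Set.mem_singleton_iff,
    Set.mem_image, Set.mem_Iio] at hq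
  rcases hq with (h | h) | ⟨j, hj, h⟩
  · exact (e i).2.1.ne' h
  · exact (e i).2.2.ne h
  · exact (e.injective (Subtype.ext h) ▸ hj).not_ge hi

end Enumeration

theorem exists_isCoherentOn_Icc [HasFiniteBiproducts C] (hT : T ≤ T.mul T) {A B : C}
    {f : A ⟶ B} (hf : T.mem f) :
    ∃ F : RatSystem C, F.IsCoherentOn T (Set.Icc 0 1) ∧
      ∃ (h1 : F.obj 1 = A) (h0 : F.obj 0 = B), f = eqToHom h1.symm ≫ F.hom 0 1 ≫ eqToHom h0 := by
  obtain ⟨e⟩ : Nonempty (ℕ ≃ Set.Ioo (0 : ℚ) 1) :=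
    have := (Set.Ioo_infinite (zero_lt_one' ℚ)).to_subtype
    inferInstance
  have hstep (n : ℕ) (F : RatSystem C) (hF : F.IsCoherentOn T (stagePoints e n)) :
      ∃ G : RatSystem C, G.IsCoherentOn T (stagePoints e (n + 1)) ∧ G.AgreeOn {(e n : ℚ)}ᶜ F := by
    rw [stagePoints_succ, Finset.coe_insert]
    exact hF.exists_insert hT ⟨0, zero_mem_stagePoints e n, (e n).2.1⟩
      ⟨1, one_mem_stagePoints e n, (e n).2.2⟩
  choose G hG hGF using hstep
  let F (n : ℕ) : {F : RatSystem C // F.IsCoherentOn T (stagePoints e n)} :=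
    Nat.rec ⟨ofHom f, (isCoherentOn_ofHom f hf).mono (by simp [stagePoints])⟩
      (fun n F => ⟨G n F.1 F.2, hG n F.1 F.2⟩) n
  obtain ⟨L, hL⟩ := exists_agreeOn_of_chain (settledPoints_mono e) (exists_mem_settledPoints e)
    (F := fun n => (F n).1) fun n =>
      (hGF n _ _).mono fun _ hq => Set.mem_compl_singleton_iff.2 (hq n le_rfl)
  have hLn (n : ℕ) : L.IsCoherentOn T (stagePoints e n) :=
    (F n).2.of_agreeOn ((hL n).mono (stagePoints_subset_settledPoints e n))
  have hmono : Monotone fun n => (stagePoints e n : Set ℚ) :=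
    fun _ _ h => Finset.coe_subset.2 (stagePoints_mono e h)
  refine ⟨L, (isCoherentOn_iUnion hmono hLn).mono (Icc_subset_iUnion_stagePoints e),
    exists_eq_of_agreeOn_ofHom f ((hL 0).mono ?_)⟩
  exact (by simp [stagePoints] : ({0, 1} : Set ℚ) ⊆ stagePoints e 0).trans
    (stagePoints_subset_settledPoints e 0)

end RatSystem

namespace CatIdeal

variable {C : Type u} [Category.{v} C] [Preadditive C]

theorem mem_tstar_iff [HasFiniteBiproducts C] [EssentiallySmall.{v} C] (I : CatIdeal C)
    {A B : C} (f : A ⟶ B) :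
    (tstar I).mem f ↔
      ∃ (X : ℚ → C) (g : ∀ p r : ℚ, X r ⟶ X p),
        (∀ p r : ℚ, 0 ≤ p → p < r → r ≤ 1 → I.mem (g p r)) ∧
        (∀ p r s : ℚ, 0 ≤ p → p < r → r < s → s ≤ 1 → g p s = g r s ≫ g p r) ∧
        ∃ (h1 : X 1 = A) (h0 : X 0 = B), f = eqToHom h1.symm ≫ g 0 1 ≫ eqToHom h0 := by
  constructor
  · intro hf
    obtain ⟨F, hF, hends⟩ := RatSystem.exists_isCoherentOn_Icc (tstar_le_mul_self I) hf
    refine ⟨F.obj, F.hom, fun p r hp hpr hr => tstar_le I ?_, fun p r s hp hpr hrs hs => ?_, hends⟩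
    · exact hF.mem p ⟨hp, hpr.le.trans hr⟩ r ⟨hp.trans hpr.le, hr⟩ hpr
    · exact hF.comp p ⟨hp, (hpr.trans hrs).le.trans hs⟩ r ⟨hp.trans hpr.le, hrs.le.trans hs⟩
        s ⟨hp.trans (hpr.trans hrs).le, hs⟩ hpr hrs
  · rintro ⟨X, g, hmem, hcomp, h1, h0, rfl⟩ α
    exact (tpow I α).comp_mem_right _ ((tpow I α).comp_mem_left _
      (mem_tpow_of_system I hmem hcomp α 0 1 le_rfl one_pos le_rfl))

end CatIdeal

open CategoryTheory in
theorem stmt4_general {C : Type u} [CategoryTheory.Category.{v} C] [CategoryTheory.Preadditive C] [CategoryTheory.Limits.HasFiniteBiproducts C] [CategoryTheory.EssentiallySmall.{v} C] {A B : C} (f : A ⟶ B) :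
    (catTransRadical C).mem f ↔
      ∃ (X : ℚ → C) (g : ∀ p r : ℚ, X r ⟶ X p),
        (∀ p r : ℚ, 0 ≤ p → p < r → r ≤ 1 → (catRadical C).mem (g p r)) ∧
        (∀ p r s : ℚ, 0 ≤ p → p < r → r < s → s ≤ 1 → g p s = g r s ≫ g p r) ∧
        ∃ (h1 : X 1 = A) (h0 : X 0 = B),
          f = CategoryTheory.eqToHom h1.symm ≫ g 0 1 ≫ CategoryTheory.eqToHom h0 :=
  CatIdeal.mem_tstar_iff (catRadical C) f

open CategoryTheory in
/-- A morphism lies in the transfinite radical iff it extends to an inverse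
system of radical morphisms indexed by the rationals in `[0,1]`. -/
theorem stmt4 {C : Type u} [CategoryTheory.Category.{v} C] [CategoryTheory.Preadditive C] [CategoryTheory.Limits.HasFiniteBiproducts C] [CategoryTheory.EssentiallySmall.{v} C] (hKS : IsKrullSchmidt C) {A B : C} (f : A ⟶ B) :
    (catTransRadical C).mem f ↔
      ∃ (X : ℚ → C) (g : ∀ p r : ℚ, X r ⟶ X p),
        (∀ p r : ℚ, 0 ≤ p → p < r → r ≤ 1 → (catRadical C).mem (g p r)) ∧
        (∀ p r s : ℚ, 0 ≤ p → p < r → r < s → s ≤ 1 → g p s = g r s ≫ g p r) ∧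
        ∃ (h1 : X 1 = A) (h0 : X 0 = B),
          f = CategoryTheory.eqToHom h1.symm ≫ g 0 1 ≫ CategoryTheory.eqToHom h0 :=
  stmt4_general f
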